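/- Let (K, K^∨) be a pair of dual reflexive Gorenstein cones of index k with deg^∨ = t_1 + ⋯ + t_k where each t_i ∈ K^∨_(1). Then for each i ∈ {1, …, k} there exists a lattice point m ∈ K with ⟨m, t_j⟩ = δ_{ij} for all 1 ≤ j ≤ k (in particular ⟨m, deg^∨⟩ = 1, so the set K_(1),i = {x ∈ K_(1) : ⟨x, t_j⟩ = δ_{ij} for all j} is nonempty). -/

import Mathlib

/-!
Fix `i`. The functional `t_i` is nonzero (it pairs to `1` with `deg`) and nonnegative on `K`;
as `K` spans `ℝ^d`, it is positive on one of the lattice generators `v` of `K`, which satisfy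
`⟨v, deg^∨⟩ = 1`. Then `⟨v, t_i⟩` is a positive integer, while `∑_j ⟨v, t_j⟩ = ⟨v, deg^∨⟩ = 1`
with nonnegative summands, so `⟨v, t_j⟩ = δ_{ij}` and `m = v` works.
-/

open scoped BigOperators Pointwise

noncomputable section

/-- The standard pairing `⟨x, y⟩ = ∑ i, x i * y i` on `ℝ^d`. -/
def pairR {d : ℕ} (x y : Fin d → ℝ) : ℝ := ∑ i, x i * y i

/-- A point of `ℝ^d` is a lattice point if all of its coordinates are integers. -/
def IsLatticePoint {d : ℕ} (x : Fin d → ℝ) : Prop := ∀ i, ∃ z : ℤ, x i = (z : ℝ)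

/-- The dual cone `K^∨ = {y : ⟨x, y⟩ ≥ 0 for all x ∈ K}`. -/
def dualCone {d : ℕ} (K : Set (Fin d → ℝ)) : Set (Fin d → ℝ) :=
  { y | ∀ x ∈ K, 0 ≤ pairR x y }

/-- A Gorenstein cone with degree element `n` (a lattice point): the set of all
nonnegative real linear combinations of a finite set of lattice points, each pairing
to `1` with `n`, such that `K ∩ (−K) = {0}` and `span K = ℝ^d`. -/
def IsGorensteinCone {d : ℕ} (K : Set (Fin d → ℝ)) (n : Fin d → ℝ) : Prop :=
  IsLatticePoint n ∧
  (∃ S : Finset (Fin d → ℝ),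
      (∀ v ∈ S, IsLatticePoint v ∧ pairR v n = 1) ∧
      K = { x | ∃ c : (Fin d → ℝ) → ℝ, (∀ v, 0 ≤ c v) ∧ x = ∑ v ∈ S, c v • v }) ∧
  K ∩ (-K) = {0} ∧
  Submodule.span ℝ K = ⊤

/-- `K_(1)`: the lattice points `m ∈ K` with `⟨m, deg^∨⟩ = 1`. -/
def Kone {d : ℕ} (K : Set (Fin d → ℝ)) (degVee : Fin d → ℝ) : Set (Fin d → ℝ) :=
  { m | IsLatticePoint m ∧ m ∈ K ∧ pairR m degVee = 1 }

/-- `K^∨_(1)`: the lattice points `n ∈ K^∨` with `⟨deg, n⟩ = 1`. -/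
def KvOne {d : ℕ} (K : Set (Fin d → ℝ)) (deg : Fin d → ℝ) : Set (Fin d → ℝ) :=
  { n | IsLatticePoint n ∧ n ∈ dualCone K ∧ pairR deg n = 1 }

theorem eq_ite_of_sum_eq_of_le_apply {ι α : Type*} [Fintype ι] [DecidableEq ι]
    [AddCommMonoid α] [PartialOrder α] [IsOrderedCancelAddMonoid α] {a : ι → α} {b : α}
    (hnonneg : ∀ j, 0 ≤ a j) (hsum : ∑ j, a j = b) {i : ι} (hi : b ≤ a i) :
    ∀ j, a j = if i = j then b else 0 := by
  have hsplit : a i + ∑ j ∈ Finset.univ.erase i, a j = b :=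
    (Finset.add_sum_erase _ a (Finset.mem_univ i)).trans hsum
  have hrest_nonneg : 0 ≤ ∑ j ∈ Finset.univ.erase i, a j :=
    Finset.sum_nonneg fun j _ => hnonneg j
  have hai : a i = b := le_antisymm (hsplit ▸ le_add_of_nonneg_right hrest_nonneg) hi
  have hrest : ∑ j ∈ Finset.univ.erase i, a j = 0 :=
    add_eq_left.mp (hai ▸ hsplit)
  intro j
  split_ifs with hij
  · exact hij ▸ hai
  · exact (Finset.sum_eq_zero_iff_of_nonneg fun j _ => hnonneg j).mp hrest j
      (Finset.mem_erase.mpr ⟨Ne.symm hij, Finset.mem_univ j⟩)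

section Pairing

variable {d : ℕ}

theorem pairR_eq_dotProduct (x y : Fin d → ℝ) : pairR x y = x ⬝ᵥ y := rfl

theorem IsLatticePoint.exists_pairR_eq_intCast {x y : Fin d → ℝ} (hx : IsLatticePoint x)
    (hy : IsLatticePoint y) : ∃ z : ℤ, pairR x y = z := by
  choose a ha using hx
  choose b hb using hy
  exact ⟨∑ i, a i * b i, by simp [pairR, ha, hb]⟩

theorem eq_zero_of_forall_pairR_eq_zero {K : Set (Fin d → ℝ)}
    (hspan : Submodule.span ℝ K = ⊤) {y : Fin d → ℝ} (hy : ∀ x ∈ K, pairR x y = 0) :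
    y = 0 := by
  have hall : ∀ x, x ⬝ᵥ y = 0 := fun x =>
    Submodule.span_induction (p := fun x _ => x ⬝ᵥ y = 0) hy (zero_dotProduct y)
      (fun _ _ _ _ hx hx' => by rw [add_dotProduct, hx, hx', add_zero])
      (fun c _ _ hx => by rw [smul_dotProduct, hx, smul_zero])
      (hspan ▸ Submodule.mem_top)
  exact dotProduct_self_eq_zero.mp (hall y)

end Pairing

namespace IsGorensteinCone

variable {d : ℕ} {K : Set (Fin d → ℝ)} {n : Fin d → ℝ}

theorem exists_mem_Kone_pairR_pos (hK : IsGorensteinCone K n) {y : Fin d → ℝ}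
    (hy : y ∈ dualCone K) (hy0 : y ≠ 0) : ∃ v ∈ Kone K n, 0 < pairR v y := by
  obtain ⟨-, ⟨S, hS, hKeq⟩, -, hspan⟩ := hK
  have hSK : ∀ v ∈ S, v ∈ K := fun v hv => by
    rw [hKeq]
    refine ⟨fun w => if w = v then 1 else 0, fun w => by dsimp only; split_ifs <;> norm_num, ?_⟩
    simp [ite_smul, Finset.sum_ite_eq', hv]
  by_contra! hle
  have hS0 : ∀ v ∈ S, pairR v y = 0 := fun v hv =>
    le_antisymm (hle v ⟨(hS v hv).1, hSK v hv, (hS v hv).2⟩) (hy v (hSK v hv))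
  refine hy0 (eq_zero_of_forall_pairR_eq_zero hspan fun x hx => ?_)
  rw [hKeq] at hx
  obtain ⟨c, -, rfl⟩ := hx
  rw [pairR_eq_dotProduct, sum_dotProduct]
  exact Finset.sum_eq_zero fun v hv => by rw [smul_dotProduct, ← pairR_eq_dotProduct, hS0 v hv,
    smul_zero]

end IsGorensteinCone

theorem stmt2_general {d k : ℕ} (K : Set (Fin d → ℝ)) (deg degVee : Fin d → ℝ)
    (hK : IsGorensteinCone K degVee)
    (t : Fin k → (Fin d → ℝ)) (ht : ∀ i, t i ∈ KvOne K deg)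
    (hdec : degVee = ∑ i, t i) :
    ∀ i : Fin k, (∃ m : Fin d → ℝ, IsLatticePoint m ∧ m ∈ K ∧
        ∀ j, pairR m (t j) = if i = j then 1 else 0) ∧
      { x | x ∈ Kone K degVee ∧ ∀ j, pairR x (t j) = if i = j then 1 else 0 }.Nonempty := by
  intro i
  have hti : t i ≠ 0 := fun h => by simpa [h, pairR] using (ht i).2.2
  obtain ⟨v, hv, hpos⟩ := hK.exists_mem_Kone_pairR_pos (ht i).2.1 hti
  obtain ⟨z, hz⟩ := hv.1.exists_pairR_eq_intCast (ht i).1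
  have hone : 1 ≤ pairR v (t i) := by
    rw [hz] at hpos ⊢
    exact_mod_cast Int.cast_pos.mp hpos
  have hsum : ∑ j, pairR v (t j) = 1 := by
    simp only [pairR_eq_dotProduct, ← dotProduct_sum, ← hdec]
    exact hv.2.2
  have hdelta := eq_ite_of_sum_eq_of_le_apply (fun j => (ht j).2.1 v hv.2.1) hsum hone
  exact ⟨⟨v, hv.1, hv.2.1, hdelta⟩, v, hv, hdelta⟩

/-- With `deg^∨ = t_1 + ⋯ + t_k`, `t_i ∈ K^∨_(1)`, for each `i` there is a
lattice point `m ∈ K` with `⟨m, t_j⟩ = δ_{ij}` for all `j`; in particular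
`⟨m, deg^∨⟩ = 1`, so the set `K_(1),i` is nonempty. -/
theorem stmt2 {d k : ℕ} (K : Set (Fin d → ℝ)) (deg degVee : Fin d → ℝ)
    (hK : IsGorensteinCone K degVee) (hKv : IsGorensteinCone (dualCone K) deg)
    (hk : pairR deg degVee = (k : ℝ))
    (t : Fin k → (Fin d → ℝ)) (ht : ∀ i, t i ∈ KvOne K deg)
    (hdec : degVee = ∑ i, t i) :
    ∀ i : Fin k, (∃ m : Fin d → ℝ, IsLatticePoint m ∧ m ∈ K ∧
        ∀ j, pairR m (t j) = if i = j then 1 else 0) ∧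
      { x | x ∈ Kone K degVee ∧ ∀ j, pairR x (t j) = if i = j then 1 else 0 }.Nonempty :=
  stmt2_general K deg degVee hK t ht hdec
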